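/- arXiv:1402.0898 — 6 statements merged into one kernel-verified Lean document; each statement's English description precedes it below -/
import Mathlib

section
/- Let x₁, x₂, y₁, y₂ > 0 and θ real, with either x₁x₂/(y₁y₂) ≥ 4 or x₁x₂/(y₁y₂) ≤ 1/4. Define β₁ = (x₁x₂ + y₁y₂ − 2√(x₁x₂y₁y₂)·cos θ)/(x₁x₂) and k̃ = max(x₁·min(1, x₂/y₂), y₁·min(1, y₂/x₂)). Then β₁·x₁·min(1, x₂/y₂) ≥ k̃/4. -/
theorem cog_receive_power_bound (x₁ x₂ y₁ y₂ θ : ℝ)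
    (hx₁ : 0 < x₁) (hx₂ : 0 < x₂) (hy₁ : 0 < y₁) (hy₂ : 0 < y₂)
    (h : 4 ≤ x₁ * x₂ / (y₁ * y₂) ∨ x₁ * x₂ / (y₁ * y₂) ≤ 1 / 4) :
    max (x₁ * min 1 (x₂ / y₂)) (y₁ * min 1 (y₂ / x₂)) / 4 ≤
      (x₁ * x₂ + y₁ * y₂ - 2 * Real.sqrt (x₁ * x₂ * y₁ * y₂) * Real.cos θ) / (x₁ * x₂) *
        (x₁ * min 1 (x₂ / y₂)) := by
  have ha : (0:ℝ) < x₁ * x₂ := by positivity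
  have hb : (0:ℝ) < y₁ * y₂ := by positivity
  set sa := Real.sqrt (x₁ * x₂) with hsa
  set sb := Real.sqrt (y₁ * y₂) with hsb
  have hsa0 : 0 < sa := Real.sqrt_pos.mpr ha
  have hsb0 : 0 < sb := Real.sqrt_pos.mpr hb
  have hsa2 : sa ^ 2 = x₁ * x₂ := Real.sq_sqrt ha.le
  have hsb2 : sb ^ 2 = y₁ * y₂ := Real.sq_sqrt hb.le
  have hsqrt : Real.sqrt (x₁ * x₂ * y₁ * y₂) = sa * sb := by
    rw [hsa, hsb, ← Real.sqrt_mul ha.le]; ring_nf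
  have hcos : Real.cos θ ≤ 1 := Real.cos_le_one θ
  have hN : (sa - sb) ^ 2 ≤
      x₁ * x₂ + y₁ * y₂ - 2 * Real.sqrt (x₁ * x₂ * y₁ * y₂) * Real.cos θ := by
    rw [hsqrt]
    nlinarith [mul_nonneg (mul_nonneg hsa0.le hsb0.le) (sub_nonneg.mpr hcos)]
  have hX0 : 0 ≤ x₁ * min 1 (x₂ / y₂) := by positivity
  have key : max (x₁ * min 1 (x₂ / y₂)) (y₁ * min 1 (y₂ / x₂)) / 4 ≤
      (sa - sb) ^ 2 / (x₁ * x₂) * (x₁ * min 1 (x₂ / y₂)) := by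
    have hNa : x₁ * x₂ / 4 ≤ (sa - sb) ^ 2 ∧
        (x₁ * x₂ / (y₁ * y₂) ≤ 1 / 4 → y₁ * y₂ / 4 ≤ (sa - sb) ^ 2) := by
      rcases h with h | h
      · have hcase : 4 * (y₁ * y₂) ≤ x₁ * x₂ := by
          have := (le_div_iff₀ hb).mp h; linarith
        have h2 : 2 * sb ≤ sa := by
          have h1 := Real.sqrt_le_sqrt hcase
          rwa [show (4:ℝ) * (y₁ * y₂) = 2 ^ 2 * (y₁ * y₂) by ring,
            Real.sqrt_mul (by norm_num : (0:ℝ) ≤ 2 ^ 2),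
            Real.sqrt_sq (by norm_num : (0:ℝ) ≤ 2)] at h1
        constructor
        · nlinarith [sq_nonneg (sa - 2 * sb),
            mul_nonneg (show (0:ℝ) ≤ sa - 2 * sb by linarith) hsb0.le]
        · intro h'
          have := (div_le_iff₀ hb).mp h'
          nlinarith
      · have hcase : 4 * (x₁ * x₂) ≤ y₁ * y₂ := by
          have := (div_le_iff₀ hb).mp h; linarith
        have h2 : 2 * sa ≤ sb := by
          have h1 := Real.sqrt_le_sqrt hcase
          rwa [show (4:ℝ) * (x₁ * x₂) = 2 ^ 2 * (x₁ * x₂) by ring,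
            Real.sqrt_mul (by norm_num : (0:ℝ) ≤ 2 ^ 2),
            Real.sqrt_sq (by norm_num : (0:ℝ) ≤ 2)] at h1
        have hNb : y₁ * y₂ / 4 ≤ (sa - sb) ^ 2 := by
          nlinarith [sq_nonneg (sb - 2 * sa),
            mul_nonneg (show (0:ℝ) ≤ sb - 2 * sa by linarith) hsa0.le]
        exact ⟨by nlinarith, fun _ => hNb⟩
    obtain ⟨C, hCdef⟩ : ∃ C, C = (sa - sb) ^ 2 / (x₁ * x₂) := ⟨_, rfl⟩
    rw [← hCdef]
    have c : (1:ℝ) ≤ C * 4 := by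
      rw [hCdef, div_mul_eq_mul_div, le_div_iff₀ ha]; linarith [hNa.1]
    rw [div_le_iff₀ (by norm_num : (0:ℝ) < 4)]
    rcases h with h | h
    · -- case a ≥ 4b : both max-arguments are ≤ X
      have hcase : 4 * (y₁ * y₂) ≤ x₁ * x₂ := by
        have := (le_div_iff₀ hb).mp h; linarith
      refine max_le ?_ ?_
      · linarith [mul_le_mul_of_nonneg_right c hX0]
      · rcases le_total x₂ y₂ with hxy | hxy
        · have m1 : min 1 (x₂ / y₂) = x₂ / y₂ := min_eq_right ((div_le_one hy₂).mpr hxy)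
          have m2 : min 1 (y₂ / x₂) = 1 := min_eq_left ((one_le_div hx₂).mpr hxy)
          rw [m1, m2]
          have hXy : y₁ ≤ x₁ * (x₂ / y₂) := by
            rw [mul_div_assoc', le_div_iff₀ hy₂]; linarith
          linarith [mul_le_mul_of_nonneg_right c
            (show (0:ℝ) ≤ x₁ * (x₂ / y₂) by positivity)]
        · have m1 : min 1 (x₂ / y₂) = 1 := min_eq_left ((one_le_div hy₂).mpr hxy)
          have m2 : min 1 (y₂ / x₂) = y₂ / x₂ := min_eq_right ((div_le_one hx₂).mpr hxy)
          rw [m1, m2]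
          have hYx : y₁ * (y₂ / x₂) ≤ x₁ := by
            rw [mul_div_assoc', div_le_iff₀ hx₂]; linarith
          linarith [mul_le_mul_of_nonneg_right c
            (show (0:ℝ) ≤ x₁ * 1 by positivity)]
    · -- case b ≥ 4a
      have hNb := hNa.2 h
      have d : (y₁ * y₂) / (x₁ * x₂) ≤ C * 4 := by
        rw [hCdef, div_mul_eq_mul_div, div_le_div_iff₀ ha ha]; nlinarith
      refine max_le ?_ ?_
      · linarith [mul_le_mul_of_nonneg_right c hX0]
      · rcases le_total x₂ y₂ with hxy | hxy
        · have m1 : min 1 (x₂ / y₂) = x₂ / y₂ := min_eq_right ((div_le_one hy₂).mpr hxy)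
          have m2 : min 1 (y₂ / x₂) = 1 := min_eq_left ((one_le_div hx₂).mpr hxy)
          rw [m1, m2]
          have heq : (y₁ * y₂) / (x₁ * x₂) * (x₁ * (x₂ / y₂)) = y₁ := by
            field_simp
          linarith [mul_le_mul_of_nonneg_right d
            (show (0:ℝ) ≤ x₁ * (x₂ / y₂) by positivity), heq.ge]
        · have m1 : min 1 (x₂ / y₂) = 1 := min_eq_left ((one_le_div hy₂).mpr hxy)
          have m2 : min 1 (y₂ / x₂) = y₂ / x₂ := min_eq_right ((div_le_one hx₂).mpr hxy)
          rw [m1, m2]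
          have heq : (y₁ * y₂) / (x₁ * x₂) * (x₁ * 1) = y₁ * (y₂ / x₂) := by
            field_simp
          linarith [mul_le_mul_of_nonneg_right d
            (show (0:ℝ) ≤ x₁ * 1 by positivity), heq.le, heq.ge]
  refine key.trans ?_
  gcongr
end

section
/- Let n, n₁, n₂, α₁, α₂ be nonnegative integers with n = max(n₁, α₁, n₂, α₂) and let S be the n×n shift matrix over 𝔽₂. Suppose k is an integer with 0 ≤ k ≤ n such that for every V₁ ∈ 𝔽₂ⁿ with upper n − k coordinates zero there exist X₁, X₂ ∈ 𝔽₂ⁿ with S^{n−n₁}X₁ + S^{n−α₁}X₂ = V₁ and S^{n−α₂}X₁ + S^{n−n₂}X₂ = 0. Then k ≤ max(n₁ − max(α₂ − n₂, 0), α₁ − max(n₂ − α₂, 0)). -/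
/-! Take V₁ = e_{n-k}. One of the two summands of the first equation is nonzero in row n - k;
say S^{n-n₁} X₁, so X₁ has a nonzero entry in row n₁ - k. In the second equation S^{n-α₂} moves
that entry down to row n₁ - k + n - α₂, and it can only be cancelled there by S^{n-n₂} X₂ if that
row lies below the first n - n₂ rows (or outside the matrix), i.e. α₂ - n₂ ≤ n₁ - k. The other
summand gives n₂ - α₂ ≤ α₁ - k in the same way. -/

/-- The n×n shift matrix over 𝔽₂ : 1's on the first subdiagonal. -/
def shiftMatrix (n : ℕ) : Matrix (Fin n) (Fin n) (ZMod 2) :=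
  fun i j => if (i : ℕ) = (j : ℕ) + 1 then 1 else 0

open Matrix

theorem shiftMatrix_pow_apply (n m : ℕ) (i j : Fin n) :
    (shiftMatrix n ^ m) i j = if (i : ℕ) = j + m then 1 else 0 := by
  induction m generalizing i with
  | zero => simp [one_apply, Fin.ext_iff]
  | succ m ih =>
    rw [pow_succ', mul_apply]
    simp only [shiftMatrix, ih, ite_mul, one_mul, zero_mul]
    have := i.isLt
    by_cases hi : (i : ℕ) = j + (m + 1)
    · rw [Fintype.sum_eq_single ⟨j + m, by omega⟩, if_pos (by simp only; omega), if_pos rfl,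
        if_pos hi]
      intro l hl
      have : (l : ℕ) ≠ j + m := fun h => hl (Fin.ext h)
      rw [if_neg (by omega)]
    · rw [if_neg hi]
      refine Finset.sum_eq_zero fun l _ => ?_
      split_ifs <;> first | rfl | omega

theorem exists_of_shiftMatrix_pow_mulVec_ne_zero {n m : ℕ} {x : Fin n → ZMod 2} {i : Fin n}
    (h : (shiftMatrix n ^ m *ᵥ x) i ≠ 0) : ∃ j : Fin n, (i : ℕ) = j + m ∧ x j ≠ 0 := by
  rw [mulVec, dotProduct] at h
  obtain ⟨j, -, hj⟩ := Finset.exists_ne_zero_of_sum_ne_zero h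
  by_cases hij : (i : ℕ) = j + m
  · exact ⟨j, hij, by simpa [shiftMatrix_pow_apply, hij] using hj⟩
  · simp [shiftMatrix_pow_apply, hij] at hj

theorem shiftMatrix_pow_mulVec_apply_of_eq {n m : ℕ} (x : Fin n → ZMod 2) {i j : Fin n}
    (h : (i : ℕ) = j + m) : (shiftMatrix n ^ m *ᵥ x) i = x j := by
  rw [mulVec, dotProduct, Fintype.sum_eq_single j]
  · simp [shiftMatrix_pow_apply, h]
  · intro l hl
    rw [shiftMatrix_pow_apply, if_neg (fun h' => hl (Fin.ext (by omega))), zero_mul]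

theorem sub_le_of_shiftMatrix_pow_mulVec_add_eq_zero {n a b : ℕ} (ha : a ≤ n)
    {x y : Fin n → ZMod 2} (h : shiftMatrix n ^ (n - a) *ᵥ x + shiftMatrix n ^ (n - b) *ᵥ y = 0)
    {j : Fin n} (hj : x j ≠ 0) : a - b ≤ j := by
  by_contra! hlt
  let i : Fin n := ⟨j + (n - a), by omega⟩
  have hy : (shiftMatrix n ^ (n - b) *ᵥ y) i ≠ 0 := by
    have hi := congrFun h i
    rw [Pi.add_apply, shiftMatrix_pow_mulVec_apply_of_eq x rfl, Pi.zero_apply,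
      add_eq_zero_iff_eq_neg'] at hi
    rwa [hi, neg_ne_zero]
  obtain ⟨j', hij', -⟩ := exists_of_shiftMatrix_pow_mulVec_ne_zero hy
  have hi : (i : ℕ) = j + (n - a) := rfl
  omega

theorem le_of_shiftMatrix_pow_mulVec_add_eq_zero {n a b c : ℕ} (ha : a ≤ n) (hc : c ≤ n)
    {x y : Fin n → ZMod 2} (h : shiftMatrix n ^ (n - a) *ᵥ x + shiftMatrix n ^ (n - b) *ᵥ y = 0)
    {i : Fin n} (hi : (shiftMatrix n ^ (n - c) *ᵥ x) i ≠ 0) : n - i ≤ c - (a - b) := by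
  obtain ⟨j, hij, hj⟩ := exists_of_shiftMatrix_pow_mulVec_ne_zero hi
  have hab := sub_le_of_shiftMatrix_pow_mulVec_add_eq_zero ha h hj
  omega

theorem zero_forcing_realizable_max (n n₁ n₂ α₁ α₂ k : ℕ)
    (hn : n = max (max n₁ α₁) (max n₂ α₂)) (hk : k ≤ n)
    (hreal : ∀ V₁ : Fin n → ZMod 2, (∀ i : Fin n, (i : ℕ) < n - k → V₁ i = 0) →
      ∃ X₁ X₂ : Fin n → ZMod 2,
        ((shiftMatrix n) ^ (n - n₁)).mulVec X₁ + ((shiftMatrix n) ^ (n - α₁)).mulVec X₂ = V₁ ∧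
        ((shiftMatrix n) ^ (n - α₂)).mulVec X₁ + ((shiftMatrix n) ^ (n - n₂)).mulVec X₂ = 0) :
    k ≤ max (n₁ - (α₂ - n₂)) (α₁ - (n₂ - α₂)) := by
  rcases Nat.eq_zero_or_pos k with rfl | hk₀
  · exact Nat.zero_le _
  have hn₁ : n₁ ≤ n := by omega
  have hα₁ : α₁ ≤ n := by omega
  have hn₂ : n₂ ≤ n := by omega
  have hα₂ : α₂ ≤ n := by omega
  let i₀ : Fin n := ⟨n - k, by omega⟩
  have hi₀ : (i₀ : ℕ) = n - k := rfl
  obtain ⟨X₁, X₂, h₁, h₂⟩ :=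
    hreal (Pi.single i₀ 1) fun i hi => Pi.single_eq_of_ne (Fin.ne_of_val_ne hi.ne) _
  have hsum : (shiftMatrix n ^ (n - n₁) *ᵥ X₁) i₀ + (shiftMatrix n ^ (n - α₁) *ᵥ X₂) i₀ = 1 := by
    simpa using congrFun h₁ i₀
  by_cases hX₁ : (shiftMatrix n ^ (n - n₁) *ᵥ X₁) i₀ = 0
  · rw [hX₁, zero_add] at hsum
    have hbound := le_of_shiftMatrix_pow_mulVec_add_eq_zero hn₂ hα₁ ((add_comm _ _).trans h₂)
      (hsum ▸ one_ne_zero)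
    omega
  · have hbound := le_of_shiftMatrix_pow_mulVec_add_eq_zero hα₂ hn₁ h₂ hX₁
    omega
end

section
/- Let δ ≥ 0 and let v₁, v₂, v₃, v₄ be nonnegative reals and β, n₁ reals with β > n₁. Define C(δ) = (1/(1+δ))·min(min(v₁, v₃), min(v₂, v₄) + δ(β − n₁)), and define δ₀ = (min(v₁, v₃) − min(v₁, v₂, v₃, v₄))/(β − n₁). Then for all δ ≥ 0, C(δ) ≤ max(min(v₁, v₂, v₃, v₄), (1/(1+δ₀))·min(v₁, v₃)), and the maximum over δ ≥ 0 of C(δ) equals max(min(v₁, v₂, v₃, v₄), (1/(1+δ₀))·min(v₁, v₃)). -/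
theorem cog_scheme_interpretation (v₁ v₂ v₃ v₄ β n₁ : ℝ)
    (h₁ : 0 ≤ v₁) (h₂ : 0 ≤ v₂) (h₃ : 0 ≤ v₃) (h₄ : 0 ≤ v₄) (hβ : n₁ < β) :
    let C : ℝ → ℝ := fun δ =>
      (1 / (1 + δ)) * min (min v₁ v₃) (min v₂ v₄ + δ * (β - n₁))
    let δ₀ : ℝ := (min v₁ v₃ - min (min v₁ v₂) (min v₃ v₄)) / (β - n₁)
    let M : ℝ := max (min (min v₁ v₂) (min v₃ v₄)) ((1 / (1 + δ₀)) * min v₁ v₃)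
    (∀ δ : ℝ, 0 ≤ δ → C δ ≤ M) ∧ (∃ δ : ℝ, 0 ≤ δ ∧ C δ = M) := by
  intro C δ₀ M
  have hk : (0:ℝ) < β - n₁ := by linarith
  have hmin : min (min v₁ v₂) (min v₃ v₄) = min (min v₁ v₃) (min v₂ v₄) := by
    rw [min_assoc, min_left_comm v₂, ← min_assoc]
  set m := min v₁ v₃ with hmdef
  set a := min v₂ v₄ with hadef
  have hm0 : 0 ≤ m := le_min h₁ h₃
  have ha0 : 0 ≤ a := le_min h₂ h₄
  have hδ₀def : δ₀ = (m - min m a) / (β - n₁) := by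
    show (m - min (min v₁ v₂) (min v₃ v₄)) / (β - n₁) = _
    rw [hmin]
  have hδ₀0 : 0 ≤ δ₀ := by
    rw [hδ₀def]
    apply div_nonneg _ hk.le
    have := min_le_left m a
    linarith
  have h1δ₀ : 0 < 1 + δ₀ := by linarith
  have hM : M = max (min m a) ((1/(1+δ₀)) * m) := by
    show max (min (min v₁ v₂) (min v₃ v₄)) _ = _
    rw [hmin]
  have hCval : ∀ δ : ℝ, C δ = (1/(1+δ)) * min m (a + δ * (β - n₁)) := fun δ => rfl
  -- key computation of C δ₀
  have hCδ₀ : C δ₀ = (1/(1+δ₀)) * m := by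
    rw [hCval]
    rcases le_total m a with h | h
    · have hma : min m a = m := min_eq_left h
      have hz : δ₀ = 0 := by rw [hδ₀def, hma]; simp
      rw [hz]
      simpa using h
    · have hma : min m a = a := min_eq_right h
      have : a + δ₀ * (β - n₁) = m := by
        rw [hδ₀def, hma, div_mul_cancel₀ _ hk.ne']
        ring
      rw [this, min_self]
  have hC0 : C 0 = min m a := by rw [hCval]; simp
  constructor
  · intro δ hδ
    have h1δ : 0 < 1 + δ := by linarith
    rw [hCval, hM]
    rcases le_total m a with h | h
    · -- δ₀ = 0, bound by m
      have hz : δ₀ = 0 := by rw [hδ₀def, min_eq_left h]; simp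
      have hb : (1/(1+δ)) * min m (a + δ * (β - n₁)) ≤ m := by
        have h1 : min m (a + δ * (β - n₁)) ≤ m := min_le_left _ _
        have h2 : (1/(1+δ)) * min m (a + δ * (β - n₁)) ≤ (1/(1+δ)) * m :=
          mul_le_mul_of_nonneg_left h1 (by positivity)
        have h3 : (1/(1+δ)) * m ≤ m := by
          rw [div_mul_eq_mul_div, one_mul, div_le_iff₀ h1δ]
          nlinarith
        linarith
      refine le_trans hb (le_trans ?_ (le_max_right _ _))
      rw [hz]; simp
    · have hma : min m a = a := min_eq_right h
      have hmak : m = a + δ₀ * (β - n₁) := by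
        rw [hδ₀def, hma, div_mul_cancel₀ _ hk.ne']; ring
      rcases le_total δ₀ δ with hdd | hdd
      · -- large δ : bound by m/(1+δ₀)
        refine le_trans ?_ (le_max_right _ _)
        have h1 : min m (a + δ * (β - n₁)) ≤ m := min_le_left _ _
        rw [div_mul_eq_mul_div, one_mul, div_mul_eq_mul_div, one_mul,
          div_le_div_iff₀ h1δ h1δ₀]
        nlinarith
      · rcases le_total (β - n₁) a with hka | hka
        · -- bound by a = min m a
          refine le_trans ?_ (le_max_left _ _)
          rw [hma]
          have h1 : min m (a + δ * (β - n₁)) ≤ a + δ * (β - n₁) := min_le_right _ _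
          rw [div_mul_eq_mul_div, one_mul, div_le_iff₀ h1δ]
          nlinarith
        · -- bound by m/(1+δ₀)
          refine le_trans ?_ (le_max_right _ _)
          have h1 : min m (a + δ * (β - n₁)) ≤ a + δ * (β - n₁) := min_le_right _ _
          rw [div_mul_eq_mul_div, one_mul, div_mul_eq_mul_div, one_mul,
            div_le_div_iff₀ h1δ h1δ₀]
          nlinarith [mul_nonneg (sub_nonneg.2 hdd) (sub_nonneg.2 hka)]
  · rcases le_total (min m a) ((1/(1+δ₀)) * m) with h | h
    · exact ⟨δ₀, hδ₀0, by rw [hCδ₀, hM, max_eq_right h]⟩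
    · exact ⟨0, le_refl 0, by rw [hC0, hM, max_eq_left h]⟩
end

section
/- Let y₁, y₂, x₂ > 0 and δ ≥ 0 be reals, and let P, P' be reals with 0 ≤ P ≤ 1+δ and 0 ≤ P' ≤ 1+δ, where P denotes the power of user 1 and P' that of user 2. Then 1 + y₂·P + (2x₂·P' + y₂·P)/(1 + y₁·P') ≤ (1+δ)·max(1 + y₂ + (2x₂ + y₂)/(1 + y₁), 1 + 2y₂). -/
theorem power_term_bound_cog (y₁ y₂ x₂ δ P : ℝ)
    (hy₁ : 0 < y₁) (hy₂ : 0 < y₂) (hx₂ : 0 < x₂) (hδ : 0 ≤ δ)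
    (hP0 : 0 ≤ P) (hP : P ≤ 1 + δ) :
    ∀ P' : ℝ, 0 ≤ P' → P' ≤ 1 + δ →
      1 + y₂ * P + (2 * x₂ * P' + y₂ * P) / (1 + y₁ * P') ≤
        (1 + δ) * max (1 + y₂ + (2 * x₂ + y₂) / (1 + y₁)) (1 + 2 * y₂) := by
  intro P' hP'0 hP'
  have hd : (0:ℝ) < 1 + y₁ * P' := by positivity
  have hb : (0:ℝ) < 1 + y₁ := by positivity
  have ha : (0:ℝ) < 1 + y₁ * (1 + δ) := by positivity
  rcases le_or_gt (2 * x₂) (y₂ * P * y₁) with hc | hc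
  · -- decreasing case: fraction ≤ y₂ * P
    have h1 : (2 * x₂ * P' + y₂ * P) / (1 + y₁ * P') ≤ y₂ * P := by
      rw [div_le_iff₀ hd]
      nlinarith [mul_nonneg hP'0 (sub_nonneg.mpr hc)]
    have h2 : 1 + y₂ * P + (2 * x₂ * P' + y₂ * P) / (1 + y₁ * P') ≤
        (1 + δ) * (1 + 2 * y₂) := by
      nlinarith [mul_le_mul_of_nonneg_left hP hy₂.le]
    calc 1 + y₂ * P + (2 * x₂ * P' + y₂ * P) / (1 + y₁ * P')
        ≤ (1 + δ) * (1 + 2 * y₂) := h2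
      _ ≤ (1 + δ) * max (1 + y₂ + (2 * x₂ + y₂) / (1 + y₁)) (1 + 2 * y₂) := by
          apply mul_le_mul_of_nonneg_left (le_max_right _ _) (by linarith)
  · -- increasing case: fraction ≤ value at P' = 1 + δ
    have h1 : (2 * x₂ * P' + y₂ * P) / (1 + y₁ * P') ≤
        (2 * x₂ * (1 + δ) + y₂ * P) / (1 + y₁ * (1 + δ)) := by
      rw [div_le_div_iff₀ hd ha]
      nlinarith [mul_nonneg (sub_nonneg.mpr hc.le) (sub_nonneg.mpr hP')]
    have h2 : (2 * x₂ * (1 + δ) + y₂ * P) / (1 + y₁ * (1 + δ)) ≤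
        (1 + δ) * ((2 * x₂ + y₂) / (1 + y₁)) := by
      rw [mul_div_assoc', div_le_div_iff₀ ha hb]
      nlinarith [mul_le_mul_of_nonneg_left hP hy₂.le, mul_nonneg hy₁.le hδ,
        mul_nonneg (mul_nonneg hy₁.le hδ) (by positivity : (0:ℝ) ≤ (1+δ)*(2*x₂+y₂))]
    have h3 : 1 + y₂ * P + (2 * x₂ * P' + y₂ * P) / (1 + y₁ * P') ≤
        (1 + δ) * (1 + y₂ + (2 * x₂ + y₂) / (1 + y₁)) := by
      have hy2P : y₂ * P ≤ y₂ * (1 + δ) := mul_le_mul_of_nonneg_left hP hy₂.le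
      have := h1.trans h2
      nlinarith [this]
    calc 1 + y₂ * P + (2 * x₂ * P' + y₂ * P) / (1 + y₁ * P')
        ≤ (1 + δ) * (1 + y₂ + (2 * x₂ + y₂) / (1 + y₁)) := h3
      _ ≤ (1 + δ) * max (1 + y₂ + (2 * x₂ + y₂) / (1 + y₁)) (1 + 2 * y₂) := by
          apply mul_le_mul_of_nonneg_left (le_max_left _ _) (by linarith)
end

section
/- Let x, y ≥ 0 and δ > 0 be reals, and let P₁, P₂ be reals with 0 ≤ P₁ ≤ (2+δ)/δ and 0 ≤ P₂ ≤ (2+δ)/δ. Then 1 + y·P₂ + (2x·P₁ + y·P₂)/(1 + y·P₁) ≤ max(1 + y·(2+δ)/δ + ((2x+y)·(2+δ)/δ)/(1 + y·(2+δ)/δ), 1 + 2y·(2+δ)/δ). -/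
theorem power_term_bound_sym (x y δ P₁ P₂ : ℝ)
    (hx : 0 ≤ x) (hy : 0 ≤ y) (hδ : 0 < δ)
    (hP₁0 : 0 ≤ P₁) (hP₁ : P₁ ≤ (2 + δ) / δ)
    (hP₂0 : 0 ≤ P₂) (hP₂ : P₂ ≤ (2 + δ) / δ) :
    1 + y * P₂ + (2 * x * P₁ + y * P₂) / (1 + y * P₁) ≤
      max (1 + y * ((2 + δ) / δ) +
            ((2 * x + y) * ((2 + δ) / δ)) / (1 + y * ((2 + δ) / δ)))
          (1 + 2 * y * ((2 + δ) / δ)) := by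
  set Q : ℝ := (2 + δ) / δ with hQdef
  have hQ : 0 < Q := div_pos (by linarith) hδ
  have hd₁ : 0 < 1 + y * P₁ := by nlinarith [mul_nonneg hy hP₁0]
  have hdQ : 0 < 1 + y * Q := by nlinarith [mul_nonneg hy hQ.le]
  by_cases h : 2 * x * P₁ + y * P₂ ≤ y * Q * (1 + y * P₁)
  · apply le_trans _ (le_max_right _ _)
    have hfrac : (2 * x * P₁ + y * P₂) / (1 + y * P₁) ≤ y * Q := by
      rw [div_le_iff₀ hd₁]; linarith
    have : y * P₂ ≤ y * Q := mul_le_mul_of_nonneg_left hP₂ hy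
    linarith
  · apply le_trans _ (le_max_left _ _)
    push_neg at h
    have hP₁pos : 0 < P₁ := by
      rcases hP₁0.lt_or_eq with h' | h'
      · exact h'
      · exfalso
        have : y * P₂ ≤ y * Q := mul_le_mul_of_nonneg_left hP₂ hy
        rw [← h'] at h; nlinarith [mul_nonneg (mul_nonneg hy hQ.le) (mul_nonneg hy hP₁0)]
    have hyQ2 : y * (Q - P₂) + y * y * Q * P₁ ≤ 2 * x * P₁ := by nlinarith
    have key : (2 * x * P₁ + y * P₂) / (1 + y * P₁) ≤
        y * (Q - P₂) + (2 * x + y) * Q / (1 + y * Q) := by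
      rw [div_le_iff₀ hd₁]
      have h2 : (2 * x + y) * Q / (1 + y * Q) * (1 + y * P₁) =
          ((2 * x + y) * Q * (1 + y * P₁)) / (1 + y * Q) := by ring
      rw [add_mul, h2, ← sub_le_iff_le_add', le_div_iff₀ hdQ]
      -- suffices to show 0 ≤ D * P₁ where D is the difference
      rw [← sub_nonneg]
      have hD : 0 ≤ P₁ * ((2 * x + y) * Q * (1 + y * P₁) -
          (2 * x * P₁ + y * P₂ - y * (Q - P₂) * (1 + y * P₁)) * (1 + y * Q)) := by
        nlinarith [mul_nonneg (sub_nonneg.2 hyQ2) (sub_nonneg.2 hP₁),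
          mul_nonneg (mul_nonneg hy (sub_nonneg.2 hP₂)) (sub_nonneg.2 hP₁),
          mul_nonneg (mul_nonneg hy hP₁0) (sub_nonneg.2 hP₂),
          mul_nonneg (mul_nonneg (mul_nonneg (mul_nonneg hy hy) hQ.le) hP₁0) (sub_nonneg.2 hP₂),
          mul_nonneg (mul_nonneg (mul_nonneg (mul_nonneg hy hy) hP₁0) hP₁0) (sub_nonneg.2 hP₂),
          mul_nonneg (mul_nonneg (mul_nonneg (mul_nonneg (mul_nonneg hy hy) hy) hQ.le)
            (mul_nonneg hP₁0 hP₁0)) (sub_nonneg.2 hP₂)]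
      exact nonneg_of_mul_nonneg_right hD hP₁pos
    linarith
end

section
/- Let a > 0 be real ('SNR') and 0 ≤ b ≤ 1 ('β'). If log₂(1 + a·(a + (1−b)·1)/(b·1 + 1)) ≥ log₂(1+a) is required in the sense that the Z-channel primary-rate constraint R₁ = log₂(1+a) forces b ≤ 1/(1+a), then the secondary rate R₂ ≤ log₂(1 + b·a) satisfies R₂ ≤ log₂(1 + a/(1+a)) ≤ 1. -/
theorem z_channel_backoff (a b : ℝ) (ha : 0 < a) (hb0 : 0 ≤ b) (hb1 : b ≤ 1)
    (h : Real.logb 2 (1 + a) ≤ Real.logb 2 (1 + (a + (1 - b) * 1) / (b * 1 + 1))) :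
    b ≤ 1 / (1 + a) ∧
    Real.logb 2 (1 + b * a) ≤ Real.logb 2 (1 + a / (1 + a)) ∧
    Real.logb 2 (1 + a / (1 + a)) ≤ 1 := by
  have h1a : (0:ℝ) < 1 + a := by linarith
  have hden : (0:ℝ) < b * 1 + 1 := by linarith
  have hle : 1 + a ≤ 1 + (a + (1 - b) * 1) / (b * 1 + 1) := by
    have hpos : (0:ℝ) < 1 + (a + (1 - b) * 1) / (b * 1 + 1) := by
      have : (0:ℝ) ≤ (a + (1 - b) * 1) / (b * 1 + 1) := div_nonneg (by linarith) hden.le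
      linarith
    exact (Real.logb_le_logb one_lt_two h1a hpos).mp h
  have hb : b ≤ 1 / (1 + a) := by
    have h2 : a * (b * 1 + 1) ≤ a + (1 - b) * 1 := by
      have := sub_nonneg.mpr hle
      have hq : a ≤ (a + (1 - b) * 1) / (b * 1 + 1) := by linarith
      calc a * (b * 1 + 1) ≤ ((a + (1 - b) * 1) / (b * 1 + 1)) * (b * 1 + 1) := by
            exact mul_le_mul_of_nonneg_right hq hden.le
        _ = a + (1 - b) * 1 := by field_simp
    rw [le_div_iff₀ h1a]
    nlinarith
  refine ⟨hb, ?_, ?_⟩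
  · have hpos1 : (0:ℝ) < 1 + b * a := by positivity
    apply (Real.logb_le_logb one_lt_two hpos1 (by positivity)).mpr
    have : b * a ≤ (1 / (1 + a)) * a :=
      mul_le_mul_of_nonneg_right hb ha.le
    have he : (1 / (1 + a)) * a = a / (1 + a) := by ring
    linarith
  · have h2 : 1 + a / (1 + a) ≤ 2 := by
      have : a / (1 + a) ≤ 1 := div_le_one_of_le₀ (by linarith) h1a.le
      linarith
    calc Real.logb 2 (1 + a / (1 + a)) ≤ Real.logb 2 2 :=
          (Real.logb_le_logb one_lt_two (by positivity) (by norm_num)).mpr h2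
      _ = 1 := by simp
end
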